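/- arXiv:1910.06203 — 4 statements merged into one kernel-verified Lean document; each statement's English description precedes it below -/
import Mathlib

section
/- Let V be a 2-dimensional oriented real inner product space with metric g, almost complex structure J (rotation by π/2, characterized by da(u,v) = g(Ju,v)), and let g_t be a family of inner products with g_0 = g, δg = g(A·,·) with A self-adjoint. Let J_t be the almost complex structure of g_t. Then δJ·J = A₀, where A₀ = A − (1/2)tr(A)·Id is the traceless part of A. -/
/-!
Differentiating `J_tᵀ G_t = √(det G_t) • Ω` at `t = 0`, with `(det G)' = det G · tr A` (since
`δG = G A`), gives `δJᵀ G + Jᵀ G A = (tr A / 2) • Jᵀ G`. Transposing and using `Aᵀ G = G A`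
yields `δJ = (tr A / 2) • J - A J`. Finally `J² = -1`: `J` has trace `0` (as
`Jᵀ = √(det G) Ω G⁻¹` with `Ω` antisymmetric and `G⁻¹` symmetric) and determinant `1`, so
Cayley–Hamilton applies.
-/

open Matrix Polynomial

section Derivatives

variable {𝕜 : Type*} [NontriviallyNormedField 𝕜] {m n p : Type*} [Fintype n]

theorem hasDerivAt_matrix_mul_apply {M : 𝕜 → Matrix m n 𝕜} {N : 𝕜 → Matrix n p 𝕜}
    {δM : Matrix m n 𝕜} {δN : Matrix n p 𝕜} {t₀ : 𝕜}
    (hM : ∀ i j, HasDerivAt (fun t => M t i j) (δM i j) t₀)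
    (hN : ∀ i j, HasDerivAt (fun t => N t i j) (δN i j) t₀) (i : m) (k : p) :
    HasDerivAt (fun t => (M t * N t) i k) ((δM * N t₀ + M t₀ * δN) i k) t₀ := by
  simp only [mul_apply, Matrix.add_apply, ← Finset.sum_add_distrib]
  exact HasDerivAt.fun_sum fun j _ => (hM i j).fun_mul (hN j k)

theorem hasDerivAt_det_fin_two {M : 𝕜 → Matrix (Fin 2) (Fin 2) 𝕜} {δM : Matrix (Fin 2) (Fin 2) 𝕜}
    {t₀ : 𝕜} (hM : ∀ i j, HasDerivAt (fun t => M t i j) (δM i j) t₀) :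
    HasDerivAt (fun t => (M t).det) (trace (adjugate (M t₀) * δM)) t₀ := by
  simp only [det_fin_two, adjugate_fin_two, trace_fin_two, mul_apply, Fin.sum_univ_two,
    of_apply, cons_val', cons_val_zero, cons_val_one, empty_val', cons_val_fin_one]
  refine (((hM 0 0).fun_mul (hM 1 1)).fun_sub ((hM 0 1).fun_mul (hM 1 0))).congr_deriv ?_
  ring

end Derivatives

theorem Matrix.trace_mul_eq_zero_of_transpose_eq_neg {R : Type*} [CommRing R] [NoZeroDivisors R]
    [CharZero R] {n : Type*} [Fintype n] {K S : Matrix n n R} (hK : Kᵀ = -K) (hS : Sᵀ = S) :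
    trace (K * S) = 0 :=
  CharZero.eq_neg_self_iff.mp <| calc
    trace (K * S) = trace (K * S)ᵀ := (trace_transpose _).symm
    _ = -trace (K * S) := by rw [transpose_mul, hK, hS, mul_neg, trace_neg, trace_mul_comm]

theorem Matrix.mul_self_eq_neg_one_of_trace_eq_zero_of_det_eq_one {R : Type*} [CommRing R]
    [Nontrivial R] {M : Matrix (Fin 2) (Fin 2) R} (htr : M.trace = 0) (hdet : M.det = 1) :
    M * M = -1 := by
  have hCH := M.aeval_self_charpoly
  simp only [charpoly_fin_two, htr, hdet, map_add, map_mul, aeval_X, map_zero, map_one,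
    zero_mul, sub_zero, sq] at hCH
  exact eq_neg_of_add_eq_zero_left hCH

theorem Matrix.eq_smul_sub_mul_of_transpose_mul_add_eq {R : Type*} [CommRing R] {n : Type*}
    [Fintype n] [DecidableEq n] {G A J δJ : Matrix n n R} {c : R} (hG : Gᵀ = G)
    (hdet : IsUnit G.det) (hA : Aᵀ * G = G * A)
    (h : δJᵀ * G + Jᵀ * (G * A) = c • (Jᵀ * G)) :
    δJ = c • J - A * J := by
  have hT := congrArg transpose h
  simp only [transpose_add, transpose_mul, transpose_smul, transpose_transpose, hG] at hT
  refine ((isUnit_iff_isUnit_det G).mpr hdet).mul_left_cancel ?_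
  rw [mul_sub, Matrix.mul_smul, ← mul_assoc, ← hA, ← hT, add_sub_cancel_right]

theorem Matrix.mul_self_eq_neg_one_of_transpose_mul_eq {K : Type*} [Field K] [CharZero K]
    {G J : Matrix (Fin 2) (Fin 2) K} {s : K} (hG : Gᵀ = G) (hdet : G.det ≠ 0)
    (hs : s * s = G.det) (hJ : Jᵀ * G = s • !![0, 1; -1, 0]) :
    J * J = -1 := by
  refine mul_self_eq_neg_one_of_trace_eq_zero_of_det_eq_one ?_ ?_
  · have hJT : Jᵀ = s • !![0, 1; -1, 0] * G⁻¹ := by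
      rw [← hJ, mul_nonsing_inv_cancel_right _ _ hdet.isUnit]
    have hΩ : (!![0, 1; -1, 0] : Matrix (Fin 2) (Fin 2) K)ᵀ = -!![0, 1; -1, 0] := by
      ext i j; fin_cases i <;> fin_cases j <;> simp
    rw [← trace_transpose, hJT, smul_mul, trace_smul,
      trace_mul_eq_zero_of_transpose_eq_neg hΩ (by rw [transpose_nonsing_inv, hG]), smul_zero]
  · have hdetJ := congrArg det hJ
    rw [det_mul, det_transpose, det_smul, det_fin_two_of, Fintype.card_fin] at hdetJ
    exact mul_right_cancel₀ hdet (by rw [hdetJ, ← hs]; ring)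

/-- Variation of the almost complex structure: for a family of inner products `g_t`
(Gram matrices `G t`) on an oriented 2-dimensional space, with almost complex structures
`J_t` characterized by `da_t(·,·) = g_t(J_t·,·)` (in matrices, `(J t)ᵀ * G t` equals the
matrix of the area form, `√det(G t)` times the standard symplectic matrix), and
`δg = g(A·,·)` with `A` self-adjoint, one has `δJ·J = A₀ = A − (1/2)(tr A)·Id`. -/
theorem stmt_7 (G J : ℝ → Matrix (Fin 2) (Fin 2) ℝ)
    (δG δJ A : Matrix (Fin 2) (Fin 2) ℝ)
    (hpos : ∀ t, (G t).PosDef)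
    (hGd : ∀ i j, HasDerivAt (fun t => G t i j) (δG i j) 0)
    (hJd : ∀ i j, HasDerivAt (fun t => J t i j) (δJ i j) 0)
    (hA : δG = G 0 * A) (hAsym : Aᵀ * G 0 = G 0 * A)
    (hJ : ∀ t, (J t)ᵀ * G t = Real.sqrt ((G t).det) • !![0, 1; (-1 : ℝ), 0]) :
    δJ * J 0 = A - ((1 / 2) * Matrix.trace A) • (1 : Matrix (Fin 2) (Fin 2) ℝ) := by
  have hdet : 0 < (G 0).det := (hpos 0).det_pos
  have hs : √(G 0).det * √(G 0).det = (G 0).det := Real.mul_self_sqrt hdet.le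
  have hGsymm : (G 0)ᵀ = G 0 := (hpos 0).isHermitian
  have hsqrt : HasDerivAt (fun t => √(G t).det) (A.trace / 2 * √(G 0).det) 0 := by
    refine ((hasDerivAt_det_fin_two hGd).sqrt hdet.ne').congr_deriv ?_
    rw [hA, ← mul_assoc, adjugate_mul, smul_mul, one_mul, trace_smul, smul_eq_mul,
      div_eq_iff (by positivity)]
    linear_combination -A.trace * hs
  have hvar : δJᵀ * G 0 + (J 0)ᵀ * (G 0 * A) = (A.trace / 2) • ((J 0)ᵀ * G 0) := by
    rw [hJ 0, smul_smul, ← hA]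
    ext i j
    refine (hasDerivAt_matrix_mul_apply (M := fun t => (J t)ᵀ) (fun i j => hJd j i) hGd i j).unique
      ?_
    simp only [hJ, Matrix.smul_apply, smul_eq_mul]
    exact hsqrt.mul_const _
  have hJJ : J 0 * J 0 = -1 :=
    mul_self_eq_neg_one_of_transpose_mul_eq hGsymm hdet.ne' hs (hJ 0)
  rw [eq_smul_sub_mul_of_transpose_mul_add_eq hGsymm hdet.ne'.isUnit hAsym hvar, sub_mul,
    smul_mul, mul_assoc, hJJ, mul_neg, mul_one]
  module
end

section
/- Let V be a 2-dimensional real inner product space, I an inner product, B a self-adjoint invertible positive operator, and set II = I(B·,·), III = I(B·,B·), H = tr B. Let (I_t, B_t) be a smooth family with I_0 = I, B_0 = B, each B_t self-adjoint for I_t, and II_t = I_t(B_t·,·). Then at t = 0: ⟨δI, II⟩_I = ⟨III, δII⟩_{II} − δH, where ⟨S,T⟩_g = tr(g⁻¹S g⁻¹T) for bilinear forms S,T and metric g, and δ denotes the t-derivative at 0. -/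
open Matrix

namespace Matrix

variable {n K : Type*} [Fintype n] [DecidableEq n] [CommRing K]

/-- With `II = g * B` and `III = Bᵀ * g * B`, this says `II⁻¹ III II⁻¹ = I⁻¹` for `B` self-adjoint
with respect to `g`. -/
theorem inv_mul_transpose_mul_mul_mul_inv_eq_inv {g B : Matrix n n K} (hg : IsUnit g.det)
    (hB : IsUnit B.det) (hsa : Bᵀ * g = g * B) :
    (g * B)⁻¹ * (Bᵀ * g * B) * (g * B)⁻¹ = g⁻¹ := by
  rw [mul_inv_rev, hsa]
  simp only [mul_assoc, nonsing_inv_mul_cancel_left _ _ hg, nonsing_inv_mul_cancel_left _ _ hB,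
    mul_nonsing_inv_cancel_left _ _ hB]

theorem trace_inv_mul_mul_inv_mul_mul_eq_sub_trace {g : Matrix n n K} (hg : IsUnit g.det)
    (B δg δB : Matrix n n K) :
    trace (g⁻¹ * δg * g⁻¹ * (g * B)) = trace (g⁻¹ * (δg * B + g * δB)) - trace δB := by
  rw [mul_add, trace_add, nonsing_inv_mul_cancel_left _ _ hg, mul_assoc _ g⁻¹,
    nonsing_inv_mul_cancel_left _ _ hg, ← mul_assoc, add_sub_cancel_right]

end Matrix

/-- `δI * B 0 + I 0 * δB` and `trace δB` are `δII` and `δH`, the derivatives at `0` of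
`II_t = I_t * B_t` and `H_t = trace B_t`. -/
theorem stmt_9_general (I B : ℝ → Matrix (Fin 2) (Fin 2) ℝ)
    (δI δB : Matrix (Fin 2) (Fin 2) ℝ)
    (hpos : ∀ t, (I t).PosDef) (hIIpos : ∀ t, (I t * B t).PosDef)
    (hsa : ∀ t, I t * B t = (B t)ᵀ * I t) :
    Matrix.trace ((I 0)⁻¹ * δI * (I 0)⁻¹ * (I 0 * B 0))
      = Matrix.trace ((I 0 * B 0)⁻¹ * ((B 0)ᵀ * I 0 * B 0) * (I 0 * B 0)⁻¹
            * (δI * B 0 + I 0 * δB))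
        - Matrix.trace δB := by
  have hI : IsUnit (I 0).det := (hpos 0).det_pos.ne'.isUnit
  have hB : IsUnit (B 0).det := by
    have hII : IsUnit (I 0 * B 0).det := (hIIpos 0).det_pos.ne'.isUnit
    rw [det_mul] at hII
    exact isUnit_of_mul_isUnit_right hII
  rw [inv_mul_transpose_mul_mul_mul_inv_eq_inv hI hB (hsa 0).symm]
  exact trace_inv_mul_mul_inv_mul_mul_eq_sub_trace hI _ _ _

/-- Variation identity `⟨δI, II⟩_I = ⟨III, δII⟩_{II} − δH`, where `I_t` are metrics
(positive symmetric matrices), `B_t` is `I_t`-self-adjoint positive with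
`II_t = I_t·B_t`, `III = B₀ᵀ·I₀·B₀`, `H_t = tr B_t`, `δII = δI·B + I·δB`, `δH = tr δB`,
and `⟨S,T⟩_g = tr(g⁻¹ S g⁻¹ T)`. -/
theorem stmt_9 (I B : ℝ → Matrix (Fin 2) (Fin 2) ℝ)
    (δI δB : Matrix (Fin 2) (Fin 2) ℝ)
    (hpos : ∀ t, (I t).PosDef) (hIIpos : ∀ t, (I t * B t).PosDef)
    (hsa : ∀ t, I t * B t = (B t)ᵀ * I t)
    (hId : ∀ i j, HasDerivAt (fun t => I t i j) (δI i j) 0)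
    (hBd : ∀ i j, HasDerivAt (fun t => B t i j) (δB i j) 0) :
    Matrix.trace ((I 0)⁻¹ * δI * (I 0)⁻¹ * (I 0 * B 0))
      = Matrix.trace ((I 0 * B 0)⁻¹ * ((B 0)ᵀ * I 0 * B 0) * (I 0 * B 0)⁻¹
            * (δI * B 0 + I 0 * δB))
        - Matrix.trace δB :=
  stmt_9_general I B δI δB hpos hIIpos hsa
end

section
/- With the same setup as the variation of fundamental forms (metrics I_t with second fundamental forms II_t, extrinsic curvature K_e,t = det B_t, area forms da_t of I_t), the first variation of the area form of I satisfies δ(da) = (−δK_e/(2K_e) + (1/2)⟨δII, II⟩_{II})·da, where da = da_{II}/√K_e. -/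
/-!
Since `det II_t = det I_t · K_{e,t}`, Jacobi's formula `δ det II = det II · tr(II⁻¹ δII)` gives
`δ log det I = ⟨δII, II⟩_{II} − δK_e / K_e`; halving it gives `δ log da`, as `da = √det I`.
-/

open Matrix Finset Equiv

namespace Matrix

variable {𝕜 : Type*} [NontriviallyNormedField 𝕜]

theorem hasDerivAt_mul_apply {l m n : Type*} [Fintype m] {A : 𝕜 → Matrix l m 𝕜}
    {B : 𝕜 → Matrix m n 𝕜} {A' : Matrix l m 𝕜} {B' : Matrix m n 𝕜} {x : 𝕜}
    (hA : ∀ i k, HasDerivAt (fun t => A t i k) (A' i k) x)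
    (hB : ∀ k j, HasDerivAt (fun t => B t k j) (B' k j) x) (i : l) (j : n) :
    HasDerivAt (fun t => (A t * B t) i j) ((A' * B x + A x * B') i j) x := by
  simp only [mul_apply, add_apply, ← sum_add_distrib]
  exact HasDerivAt.fun_sum fun k _ => (hA i k).mul (hB k j)

variable {n : Type*} [Fintype n] [DecidableEq n]

theorem prod_updateCol_perm {R : Type*} [CommMonoid R] (M : Matrix n n R) (i : n) (c : n → R)
    (σ : Perm n) :
    ∏ j, M.updateCol i c (σ j) j = (∏ j ∈ univ.erase i, M (σ j) j) * c (σ i) := by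
  rw [← prod_erase_mul _ _ (mem_univ i), updateCol_self]
  congr 1
  exact prod_congr rfl fun j hj => updateCol_ne (ne_of_mem_erase hj)

theorem sum_det_updateCol_eq_trace {R : Type*} [CommRing R] (M N : Matrix n n R) :
    ∑ i, (M.updateCol i (Nᵀ i)).det = trace (adjugate M * N) := by
  simp only [← cramer_apply, cramer_eq_adjugate_mulVec, trace, diag, mul_apply, mulVec,
    dotProduct, transpose_apply]

theorem hasDerivAt_det {A : 𝕜 → Matrix n n 𝕜} {A' : Matrix n n 𝕜} {x : 𝕜}
    (hA : ∀ i j, HasDerivAt (fun t => A t i j) (A' i j) x) :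
    HasDerivAt (fun t => (A t).det) (trace (adjugate (A x) * A')) x := by
  simp only [det_apply']
  rw [← sum_det_updateCol_eq_trace]
  simp only [det_apply', prod_updateCol_perm, transpose_apply]
  rw [sum_comm]
  refine HasDerivAt.fun_sum fun σ _ => ?_
  rw [← mul_sum]
  refine HasDerivAt.const_mul _ ?_
  simpa only [smul_eq_mul] using HasDerivAt.fun_finsetProd fun i _ => hA (σ i) i

theorem hasDerivAt_det_of_det_ne_zero {A : 𝕜 → Matrix n n 𝕜} {A' : Matrix n n 𝕜} {x : 𝕜}
    (hA : ∀ i j, HasDerivAt (fun t => A t i j) (A' i j) x) (hx : (A x).det ≠ 0) :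
    HasDerivAt (fun t => (A t).det) ((A x).det * trace ((A x)⁻¹ * A')) x := by
  convert hasDerivAt_det hA using 1
  rw [inv_def, Ring.inverse_eq_inv', smul_mul_assoc, trace_smul, smul_eq_mul,
    mul_inv_cancel_left₀ hx]

end Matrix

theorem stmt_10_general (I B : ℝ → Matrix (Fin 2) (Fin 2) ℝ)
    (δI δB : Matrix (Fin 2) (Fin 2) ℝ) (δKe : ℝ)
    (hpos : ∀ t, (I t).PosDef)
    (hKe : ∀ t, 0 < (B t).det)
    (hId : ∀ i j, HasDerivAt (fun t => I t i j) (δI i j) 0)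
    (hBd : ∀ i j, HasDerivAt (fun t => B t i j) (δB i j) 0)
    (hKed : HasDerivAt (fun t => (B t).det) δKe 0) :
    HasDerivAt (fun t => Real.sqrt ((I t).det))
      ((-δKe / (2 * (B 0).det)
          + (1 / 2) * Matrix.trace ((I 0 * B 0)⁻¹ * (δI * B 0 + I 0 * δB)))
        * Real.sqrt ((I 0).det)) 0 := by
  have hI : 0 < (I 0).det := (hpos 0).det_pos
  have hB (t : ℝ) : (B t).det ≠ 0 := (hKe t).ne'
  have hB0 := hB 0
  set τ := trace ((I 0 * B 0)⁻¹ * (δI * B 0 + I 0 * δB))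
  have hII : HasDerivAt (fun t => (I t * B t).det) ((I 0 * B 0).det * τ) 0 :=
    hasDerivAt_det_of_det_ne_zero (hasDerivAt_mul_apply hId hBd)
      (by rw [det_mul]; exact mul_ne_zero hI.ne' hB0)
  have hdetI : HasDerivAt (fun t => (I t).det)
      (((I 0).det * (B 0).det * τ * (B 0).det - (I 0).det * (B 0).det * δKe) / (B 0).det ^ 2)
      0 := by
    simpa only [det_mul, mul_div_cancel_right₀ _ (hB _)] using hII.fun_div hKed hB0
  convert hdetI.sqrt hI.ne' using 1
  field_simp
  rw [Real.sq_sqrt hI.le]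
  ring

/-- First variation of the area form of `I`: with `II_t = I_t·B_t`, `K_{e,t} = det B_t > 0`
and `da_t = √det(I_t) = da_{II_t}/√K_{e,t}`, one has
`δ(da) = (−δK_e/(2K_e) + (1/2)⟨δII, II⟩_{II})·da`, where
`⟨δII, II⟩_{II} = tr(II⁻¹·δII)` and `δII = δI·B + I·δB`. -/
theorem stmt_10 (I B : ℝ → Matrix (Fin 2) (Fin 2) ℝ)
    (δI δB : Matrix (Fin 2) (Fin 2) ℝ) (δKe : ℝ)
    (hpos : ∀ t, (I t).PosDef) (hIIpos : ∀ t, (I t * B t).PosDef)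
    (hsa : ∀ t, I t * B t = (B t)ᵀ * I t)
    (hKe : ∀ t, 0 < (B t).det)
    (hId : ∀ i j, HasDerivAt (fun t => I t i j) (δI i j) 0)
    (hBd : ∀ i j, HasDerivAt (fun t => B t i j) (δB i j) 0)
    (hKed : HasDerivAt (fun t => (B t).det) δKe 0) :
    HasDerivAt (fun t => Real.sqrt ((I t).det))
      ((-δKe / (2 * (B 0).det)
          + (1 / 2) * Matrix.trace ((I 0 * B 0)⁻¹ * (δI * B 0 + I 0 * δB)))
        * Real.sqrt ((I 0).det)) 0 :=
  stmt_10_general I B δI δB δKe hpos hKe hId hBd hKed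
end

section
/- Let h_k, g_k : (−1,0] → S²(V) be smooth families of inner products on a 2-dimensional vector space V with g_0 = h_0, derivative of g_k at k=0 equal to 0, and derivative of h_k at 0 equal to ḣ_0 = −(1/2)h_0 − Re q_0 for some symmetric traceless (w.r.t. h_0) bilinear form Re q_0. Then d/dk|_{k=0} tr_{g_k}(h_k) = tr_{g_0}(ḣ_0) = −1, and lim_{k→0} (−2√(k+1)/k)·( h_k − (tr_{g_k}(h_k)/2)·g_k ) = 2·Re q_0. -/
/-!
Since `g₀ = h₀`, near `k = 0` one has `tr_{g_k}(h_k) = 2 + tr(g_k⁻¹ (h_k - g_k))` with `h_k - g_k`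
vanishing at `0`, so by continuity of `g_k⁻¹` its derivative there is
`tr(h₀⁻¹ (ḣ₀ - ġ₀)) = -1 - tr(h₀⁻¹ Q) = -1`. Consequently `F_k = h_k - (tr_{g_k}(h_k)/2) g_k` vanishes at
`0` with derivative `ḣ₀ + h₀/2 = -Q`, so `F_k / k → -Q`, and the factor `-2√(k+1) → -2` gives `2Q`.
-/

open Matrix Filter Topology

theorem tendsto_inv_smul_of_hasDerivAt {E : Type*} [NormedAddCommGroup E] [NormedSpace ℝ E]
    {F : ℝ → E} {F' : E} {x : ℝ} (hF : HasDerivAt F F' x) (hFx : F x = 0) :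
    Tendsto (fun k => (k - x)⁻¹ • F k) (𝓝[≠] x) (𝓝 F') := by
  refine (hasDerivAt_iff_tendsto_slope.1 hF).congr fun k => ?_
  rw [slope_def_module, hFx, sub_zero]

namespace Matrix

variable {m n : Type*} [Fintype m] [Fintype n] {x : ℝ}

theorem tendsto_inv_smul_of_hasDerivAt_apply {F : ℝ → Matrix m n ℝ} {F' : Matrix m n ℝ}
    (hF : ∀ i j, HasDerivAt (fun k => F k i j) (F' i j) x) (hFx : F x = 0) :
    Tendsto (fun k => (k - x)⁻¹ • F k) (𝓝[≠] x) (𝓝 F') :=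
  open scoped Matrix.Norms.Elementwise in
  tendsto_inv_smul_of_hasDerivAt (hasDerivAt_pi.2 fun i => hasDerivAt_pi.2 (hF i)) hFx

theorem hasDerivAt_trace_inv_mul [DecidableEq n] {g h : ℝ → Matrix n n ℝ}
    {D : Matrix n n ℝ} (hg : ContinuousAt g x) (hdet : IsUnit (g x).det) (hgh : g x = h x)
    (hD : ∀ i j, HasDerivAt (fun k => h k i j - g k i j) (D i j) x) :
    HasDerivAt (fun k => trace ((g k)⁻¹ * h k)) (trace ((g x)⁻¹ * D)) x := by
  have hunit : ∀ᶠ k in 𝓝 x, IsUnit (g k).det := by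
    have hc : ContinuousAt (fun k => (g k).det) x :=
      continuous_id.matrix_det.continuousAt.comp hg
    filter_upwards [hc.eventually_ne hdet.ne_zero] with k hk using hk.isUnit
  have hslope : ∀ᶠ k in 𝓝[≠] x, trace ((g k)⁻¹ * ((k - x)⁻¹ • (h k - g k))) =
      slope (fun k => trace ((g k)⁻¹ * h k)) x k := by
    filter_upwards [nhdsWithin_le_nhds hunit] with k hk
    rw [slope_def_module, ← hgh, nonsing_inv_mul _ hdet, Matrix.mul_smul, trace_smul, mul_sub,
      nonsing_inv_mul _ hk, trace_sub, smul_eq_mul]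
  refine hasDerivAt_iff_tendsto_slope.2 (Tendsto.congr' hslope ?_)
  have hinv : Tendsto (fun k => (g k)⁻¹) (𝓝[≠] x) (𝓝 (g x)⁻¹) :=
    ((continuousAt_matrix_inv _ (NormedRing.inverse_continuousAt hdet.unit)).comp
      hg).tendsto.mono_left nhdsWithin_le_nhds
  have hquot : Tendsto (fun k => (k - x)⁻¹ • (h k - g k)) (𝓝[≠] x) (𝓝 D) :=
    tendsto_inv_smul_of_hasDerivAt_apply (F := h - g) hD (by rw [Pi.sub_apply, hgh, sub_self])
  have htr : Continuous fun p : Matrix n n ℝ × Matrix n n ℝ => trace (p.1 * p.2) :=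
    (continuous_fst.matrix_mul continuous_snd).matrix_trace
  exact ((htr.tendsto ((g x)⁻¹, D)).comp (hinv.prodMk_nhds hquot) :)

end Matrix

theorem stmt_16_general (h g : ℝ → Matrix (Fin 2) (Fin 2) ℝ)
    (Q : Matrix (Fin 2) (Fin 2) ℝ)
    (hposh : ∀ k ∈ Set.Ioc (-1 : ℝ) 0, (h k).PosDef)
    (heq : g 0 = h 0)
    (hgd : ∀ i j, HasDerivAt (fun k => g k i j) 0 0)
    (hhd : ∀ i j, HasDerivAt (fun k => h k i j) (((-(1 / 2 : ℝ)) • h 0 - Q) i j) 0)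
    (hQtr : Matrix.trace ((h 0)⁻¹ * Q) = 0) :
    HasDerivAt (fun k => Matrix.trace ((g k)⁻¹ * h k)) (-1) 0 ∧
    Filter.Tendsto
      (fun k : ℝ => ((-2) * Real.sqrt (k + 1) / k) •
        (h k - (Matrix.trace ((g k)⁻¹ * h k) / 2) • g k))
      (nhdsWithin 0 (Set.Iio 0)) (nhds ((2 : ℝ) • Q)) := by
  have hunit : IsUnit (h 0).det := (hposh 0 ⟨by norm_num, le_rfl⟩).det_pos.ne'.isUnit
  have hinv : (h 0)⁻¹ * h 0 = 1 := nonsing_inv_mul _ hunit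
  have hg : ContinuousAt g 0 :=
    continuousAt_pi.2 fun i => continuousAt_pi.2 fun j => (hgd i j).continuousAt
  have ht : HasDerivAt (fun k => trace ((g k)⁻¹ * h k)) (-1) 0 := by
    convert hasDerivAt_trace_inv_mul (D := (-(1 / 2 : ℝ)) • h 0 - Q) hg (heq ▸ hunit) heq
      fun i j => by simpa using (hhd i j).fun_sub (hgd i j) using 1
    rw [heq, mul_sub, Matrix.mul_smul, hinv, trace_sub, trace_smul, hQtr]
    norm_num
  have ht0 : trace ((g 0)⁻¹ * h 0) = 2 := by
    rw [heq, hinv, trace_one]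
    simp
  refine ⟨ht, ?_⟩
  set F := fun k => h k - (trace ((g k)⁻¹ * h k) / 2) • g k with hF
  have hFd : ∀ i j, HasDerivAt (fun k => F k i j) (-Q i j) 0 := fun i j => by
    refine ((hhd i j).fun_sub ((ht.div_const 2).fun_mul (hgd i j))).congr_deriv ?_
    rw [ht0, heq]
    simp only [Matrix.sub_apply, Matrix.smul_apply, smul_eq_mul]
    ring
  have hF0 : F 0 = 0 := by
    simp only [hF, ht0]
    rw [heq]
    norm_num
  have hsqrt : Tendsto (fun k : ℝ => -2 * Real.sqrt (k + 1)) (𝓝[<] 0) (𝓝 (-2)) := by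
    refine (Continuous.tendsto' (by fun_prop) 0 (-2) ?_).mono_left nhdsWithin_le_nhds
    norm_num
  have hlim := hsqrt.smul ((tendsto_inv_smul_of_hasDerivAt_apply (F' := -Q) hFd hF0).mono_left
    (nhdsWithin_mono _ fun k hk => ne_of_lt hk))
  simp only [sub_zero, smul_smul, neg_smul_neg, ← div_eq_mul_inv] at hlim
  exact hlim

/-- Asymptotics of the rescaled fundamental forms (core of Corollary 2.4): if `h_k`,
`g_k` are families of inner products (Gram matrices) on a 2-dimensional space with
`g_0 = h_0`, `ġ_0 = 0`, `ḣ_0 = −(1/2)h_0 − Re q_0` where `Re q_0` is symmetric and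
`h_0`-traceless, then `d/dk|₀ tr_{g_k}(h_k) = −1` and
`(−2√(k+1)/k)·(h_k − (tr_{g_k}(h_k)/2)·g_k) → 2·Re q_0` as `k → 0⁻`. -/
theorem stmt_16 (h g : ℝ → Matrix (Fin 2) (Fin 2) ℝ)
    (Q : Matrix (Fin 2) (Fin 2) ℝ)
    (hposh : ∀ k ∈ Set.Ioc (-1 : ℝ) 0, (h k).PosDef)
    (hposg : ∀ k ∈ Set.Ioc (-1 : ℝ) 0, (g k).PosDef)
    (heq : g 0 = h 0)
    (hgd : ∀ i j, HasDerivAt (fun k => g k i j) 0 0)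
    (hhd : ∀ i j, HasDerivAt (fun k => h k i j) (((-(1 / 2 : ℝ)) • h 0 - Q) i j) 0)
    (hQsym : Qᵀ = Q) (hQtr : Matrix.trace ((h 0)⁻¹ * Q) = 0) :
    HasDerivAt (fun k => Matrix.trace ((g k)⁻¹ * h k)) (-1) 0 ∧
    Filter.Tendsto
      (fun k : ℝ => ((-2) * Real.sqrt (k + 1) / k) •
        (h k - (Matrix.trace ((g k)⁻¹ * h k) / 2) • g k))
      (nhdsWithin 0 (Set.Iio 0)) (nhds ((2 : ℝ) • Q)) :=
  stmt_16_general h g Q hposh heq hgd hhd hQtr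
end
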